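/- Let x be the least squares solution of the full system AX = B with A ∈ Mat(P, Q, ℝ) of full column rank. Partition X = (X₁, X₂) and A = [A₁ | A₂] accordingly, and suppose X₂ is fixed to a known value v. Then the least squares minimizer over X₁ of ‖A₁X₁ + A₂v − B‖ satisfies the normal equations A₁ᵀA₁ X₁ = A₁ᵀ(B − A₂v), and it equals the X₁-component of x if and only if A₁ᵀA₂(v − x₂) = 0, where x = (x₁, x₂). -/

import Mathlib

/-!
Both `w` and the first block `x₁` of the full minimizer satisfy the normal equations of the
partial problem, with right-hand sides `A₁ᵀ(B - A₂v)` and `A₁ᵀ(B - A₂x₂)` respectively, so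
`A₁ᵀA₁ (w - x₁) = -A₁ᵀA₂ (v - x₂)`. Full column rank of `[A₁ | A₂]` makes `A₁`, hence
`A₁ᵀA₁`, injective, and the equivalence follows.
-/

open Matrix

/-- Euclidean (l²) norm on `Fin n → ℝ`. -/
noncomputable def euclNorm {n : ℕ} (v : Fin n → ℝ) : ℝ :=
  Real.sqrt (∑ i, v i ^ 2)

lemma euclNorm_le_euclNorm_iff {n : ℕ} {a b : Fin n → ℝ} :
    euclNorm a ≤ euclNorm b ↔ a ⬝ᵥ a ≤ b ⬝ᵥ b := by
  simp only [euclNorm, dotProduct, ← sq]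
  exact Real.sqrt_le_sqrt_iff (Finset.sum_nonneg fun i _ => sq_nonneg (b i))

namespace Matrix

variable {m n K : Type*} [Fintype n]

section OrderedField

variable [Fintype m] [Field K] [LinearOrder K] [IsStrictOrderedRing K]

theorem transpose_mulVec_add_eq_zero_of_forall_le (A : Matrix m n K) (c : m → K) (w : n → K)
    (h : ∀ X, (A *ᵥ w + c) ⬝ᵥ (A *ᵥ w + c) ≤ (A *ᵥ X + c) ⬝ᵥ (A *ᵥ X + c)) :
    Aᵀ *ᵥ (A *ᵥ w + c) = 0 := by
  set r := A *ᵥ w + c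
  have orth : ∀ d, r ⬝ᵥ (A *ᵥ d) = 0 := by
    intro d
    -- `t ↦ ‖r + t A d‖² - ‖r‖²` is a nonnegative quadratic with no constant term
    have quad : ∀ t : K,
        0 ≤ ((A *ᵥ d) ⬝ᵥ (A *ᵥ d)) * (t * t) + 2 * (r ⬝ᵥ (A *ᵥ d)) * t + 0 := by
      intro t
      have hmin := h (w + t • d)
      have expand : A *ᵥ (w + t • d) + c = r + t • (A *ᵥ d) := by
        rw [mulVec_add, mulVec_smul, add_right_comm]
      rw [expand] at hmin
      simp only [add_dotProduct, dotProduct_add, smul_dotProduct, dotProduct_smul,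
        dotProduct_comm (A *ᵥ d) r, smul_eq_mul] at hmin
      linarith
    have hdisc := discrim_le_zero quad
    rw [discrim] at hdisc
    nlinarith [sq_nonneg (r ⬝ᵥ (A *ᵥ d))]
  have hself := orth (Aᵀ *ᵥ r)
  rwa [dotProduct_mulVec, ← mulVec_transpose, dotProduct_self_eq_zero] at hself

theorem transpose_mul_self_mulVec_injective {A : Matrix m n K}
    (hA : Function.Injective A.mulVec) : Function.Injective (Aᵀ * A).mulVec := by
  rw [← coe_mulVecLin, ← LinearMap.ker_eq_bot, ker_mulVecLin_transpose_mul_self,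
    LinearMap.ker_eq_bot]
  exact hA

end OrderedField

theorem mulVec_injective_of_rank_eq_card [Field K] {A : Matrix m n K}
    (hA : A.rank = Fintype.card n) : Function.Injective A.mulVec := by
  rw [mulVec_injective_iff, linearIndependent_iff_card_eq_finrank_span, ← hA,
    rank_eq_finrank_span_cols, Set.finrank]

theorem mulVec_injective_of_fromCols_left [CommSemiring K] {n' : Type*} [Fintype n']
    {A₁ : Matrix m n K} {A₂ : Matrix m n' K} (h : Function.Injective (fromCols A₁ A₂).mulVec) :
    Function.Injective A₁.mulVec := by
  intro u u' huu'
  have hcols : (fromCols A₁ A₂) *ᵥ Sum.elim u 0 = (fromCols A₁ A₂) *ᵥ Sum.elim u' 0 := by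
    simp only [fromCols_mulVec_sumElim, mulVec_zero, add_zero, huu']
  funext i
  simpa using congrFun (h hcols) (Sum.inl i)

end Matrix

theorem transpose_mulVec_add_eq_zero_of_euclNorm_le {P Q : ℕ} (A : Matrix (Fin P) (Fin Q) ℝ)
    (c : Fin P → ℝ) (w : Fin Q → ℝ) (h : ∀ X, euclNorm (A *ᵥ w + c) ≤ euclNorm (A *ᵥ X + c)) :
    Aᵀ *ᵥ (A *ᵥ w + c) = 0 :=
  transpose_mulVec_add_eq_zero_of_forall_le A c w fun X => euclNorm_le_euclNorm_iff.mp (h X)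

theorem stmt_13 (P Q₁ Q₂ : ℕ)
    (A₁ : Matrix (Fin P) (Fin Q₁) ℝ) (A₂ : Matrix (Fin P) (Fin Q₂) ℝ)
    (hrank : (Matrix.fromCols A₁ A₂).rank = Q₁ + Q₂)
    (B : Fin P → ℝ) (x₁ : Fin Q₁ → ℝ) (x₂ : Fin Q₂ → ℝ)
    (hfull : ∀ (X₁ : Fin Q₁ → ℝ) (X₂ : Fin Q₂ → ℝ),
      euclNorm (A₁.mulVec x₁ + A₂.mulVec x₂ - B)
        ≤ euclNorm (A₁.mulVec X₁ + A₂.mulVec X₂ - B))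
    (v : Fin Q₂ → ℝ) (w : Fin Q₁ → ℝ)
    (hw : ∀ X₁ : Fin Q₁ → ℝ,
      euclNorm (A₁.mulVec w + A₂.mulVec v - B)
        ≤ euclNorm (A₁.mulVec X₁ + A₂.mulVec v - B)) :
    (A₁.transpose * A₁).mulVec w = A₁.transpose.mulVec (B - A₂.mulVec v) ∧
    (w = x₁ ↔ A₁.transpose.mulVec (A₂.mulVec (v - x₂)) = 0) := by
  have normal_w : A₁ᵀ *ᵥ (A₁ *ᵥ w + (A₂ *ᵥ v - B)) = 0 :=
    transpose_mulVec_add_eq_zero_of_euclNorm_le A₁ _ w fun X => by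
      simpa only [add_sub_assoc] using hw X
  have normal_x₁ : A₁ᵀ *ᵥ (A₁ *ᵥ x₁ + (A₂ *ᵥ x₂ - B)) = 0 :=
    transpose_mulVec_add_eq_zero_of_euclNorm_le A₁ _ x₁ fun X => by
      simpa only [add_sub_assoc] using hfull X x₂
  simp only [mulVec_add, mulVec_sub] at normal_w normal_x₁
  have hinj : Function.Injective (A₁ᵀ * A₁).mulVec :=
    transpose_mul_self_mulVec_injective <| mulVec_injective_of_fromCols_left (A₂ := A₂) <|
      mulVec_injective_of_rank_eq_card (by simpa using hrank)
  have hdiff : (A₁ᵀ * A₁) *ᵥ (w - x₁) = -(A₁ᵀ *ᵥ (A₂ *ᵥ (v - x₂))) := by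
    simp only [← mulVec_mulVec, mulVec_sub]
    linear_combination (norm := module) normal_w - normal_x₁
  refine ⟨?_, ?_⟩
  · rw [← mulVec_mulVec, mulVec_sub]
    linear_combination (norm := module) normal_w
  · rw [← sub_eq_zero, ← hinj.eq_iff' (mulVec_zero _), hdiff, neg_eq_zero]
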